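/- Let G be a finite connected graph with |V| ≥ 3 and let d be a derivation of the evolution algebra A(G) with matrix (d_{ij}). For every twin class T of G with |T| ≥ 3 and every i ∈ T, one has Σ_{k ∈ T} d_{ki} = 0. -/

import Mathlib

/-!
Off the diagonal, the derivation rule for `e_s e_t = 0` forces `d s t = - d t s` when `s, t` share
a neighbour, and `d s t = 0` when moreover `s, t` are not twins. So for `n ~ t` the rule for `e_n²`
reduces to `∑_{k twin of t} d k t = 2 d n n`. Summing these column sums over the twin class `T`
of `t`, the antisymmetric off-diagonal part cancels, and the diagonal is constant on `T` (twins have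
the same row of the adjacency matrix), which gives `d t t = 2 d n n`. Used in both directions along
an edge this yields `d t t = 4 d t t`, so the diagonal vanishes at every non-isolated vertex, and
the column sum `2 d n n` is `0`.
-/

open Finset

theorem Finset.sum_sum_eq_sum_diag_of_add_swap_eq_zero {ι M : Type*} [AddCommMonoid M]
    [IsAddTorsionFree M] {T : Finset ι} {f : ι → ι → M}
    (hf : ∀ a ∈ T, ∀ b ∈ T, a ≠ b → f a b + f b a = 0) :
    ∑ a ∈ T, ∑ b ∈ T, f a b = ∑ a ∈ T, f a a := by
  apply IsAddTorsionFree.nsmul_right_injective two_ne_zero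
  simp only [two_nsmul]
  nth_rewrite 2 [Finset.sum_comm]
  rw [← sum_add_distrib, ← sum_add_distrib]
  refine sum_congr rfl fun a ha => ?_
  rw [← sum_add_distrib]
  exact sum_eq_single_of_mem a ha fun b hb hba => hf a ha b hb hba.symm

namespace SimpleGraph

variable {V K : Type*} [Field K]

/- The coordinates of `d (e_i e_j) = d e_i · e_j + e_i · d e_j` in the evolution algebra of `G`,
for `i ≠ j` and for `i = j` respectively. -/
def DerivMixedRule (G : SimpleGraph V) [DecidableRel G.Adj] (d : V → V → K) : Prop :=
  ∀ i j k : V, i ≠ j →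
    (if G.Adj j k then (1:K) else 0) * d i j + (if G.Adj i k then (1:K) else 0) * d j i = 0

def DerivSquareRule [Fintype V] (G : SimpleGraph V) [DecidableRel G.Adj] (d : V → V → K) :
    Prop :=
  ∀ i j : V, ∑ k, (if G.Adj i k then (1:K) else 0) * d k j =
    2 * (if G.Adj i j then (1:K) else 0) * d i i

def twinClass [Fintype V] [DecidableEq V] (G : SimpleGraph V) [DecidableRel G.Adj] (i : V) :
    Finset V :=
  univ.filter fun j => G.neighborFinset j = G.neighborFinset i

section

variable [Fintype V] [DecidableEq V] {G : SimpleGraph V} [DecidableRel G.Adj]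

theorem mem_twinClass_iff {i j : V} : j ∈ G.twinClass i ↔ ∀ m, G.Adj j m ↔ G.Adj i m := by
  simp [twinClass, Finset.ext_iff]

theorem mem_twinClass_self (i : V) : i ∈ G.twinClass i :=
  mem_twinClass_iff.2 fun _ => Iff.rfl

theorem twinClass_eq_of_mem {i j : V} (h : j ∈ G.twinClass i) :
    G.twinClass j = G.twinClass i := by
  ext k
  simp [twinClass, (mem_filter.1 h).2]

theorem adj_of_mem_twinClass {i j n : V} (h : j ∈ G.twinClass i) (hn : G.Adj n i) :
    G.Adj n j :=
  ((mem_twinClass_iff.1 h n).2 hn.symm).symm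

end

variable {G : SimpleGraph V} [DecidableRel G.Adj] {d : V → V → K} {s t m n : V}

theorem DerivMixedRule.add_swap_eq_zero (h : G.DerivMixedRule d) (hst : s ≠ t)
    (hs : G.Adj s m) (ht : G.Adj t m) : d s t + d t s = 0 := by
  simpa [hs, ht] using h s t m hst

theorem DerivMixedRule.eq_zero_of_not_adj_of_adj (h : G.DerivMixedRule d) (hst : s ≠ t)
    (hs : ¬G.Adj s m) (ht : G.Adj t m) : d s t = 0 := by
  simpa [hs, ht] using h s t m hst

theorem DerivMixedRule.eq_zero_of_not_mem_twinClass [Fintype V] [DecidableEq V]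
    (h : G.DerivMixedRule d) (hs : G.Adj s m) (ht : G.Adj t m) (hst : s ∉ G.twinClass t) :
    d s t = 0 := by
  have hne : s ≠ t := by
    rintro rfl
    exact hst (mem_twinClass_self s)
  obtain ⟨m', hm'⟩ : ∃ m', ¬(G.Adj s m' ↔ G.Adj t m') := by
    simpa [mem_twinClass_iff] using hst
  by_cases hsm' : G.Adj s m'
  · have hts : d t s = 0 := h.eq_zero_of_not_adj_of_adj hne.symm (by tauto) hsm'
    simpa [hts] using h.add_swap_eq_zero hne hs ht
  · exact h.eq_zero_of_not_adj_of_adj hne hsm' (by tauto)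

theorem sum_twinClass_deriv_eq [Fintype V] [DecidableEq V] (hmix : G.DerivMixedRule d)
    (hsq : G.DerivSquareRule d) (hn : G.Adj n t) :
    ∑ k ∈ G.twinClass t, d k t = 2 * d n n :=
  calc ∑ k ∈ G.twinClass t, d k t
    _ = ∑ k ∈ G.neighborFinset n, d k t := by
      refine sum_subset (fun k hk => ?_) fun k hk hkt => ?_
      · exact (mem_neighborFinset _ _ _).2 (adj_of_mem_twinClass hk hn)
      · exact hmix.eq_zero_of_not_mem_twinClass ((mem_neighborFinset _ _ _).1 hk).symm hn.symm hkt
    _ = ∑ k, (if G.Adj n k then (1:K) else 0) * d k t := by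
      simp [neighborFinset_eq_filter, sum_filter]
    _ = 2 * d n n := by simpa [hn] using hsq n t

theorem DerivSquareRule.diag_eq_of_mem_twinClass [Fintype V] [DecidableEq V] [NeZero (2 : K)]
    (hsq : G.DerivSquareRule d) (hst : s ∈ G.twinClass t) (hn : G.Adj t n) : d s s = d t t := by
  have hs := hsq s n
  have ht := hsq t n
  simp only [mem_twinClass_iff.1 hst, if_pos hn, mul_one] at hs ht
  exact mul_left_cancel₀ two_ne_zero (hs.symm.trans ht)

theorem diag_deriv_eq_two_mul_of_adj [Fintype V] [DecidableEq V] [CharZero K]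
    (hmix : G.DerivMixedRule d) (hsq : G.DerivSquareRule d) (hn : G.Adj n t) :
    d t t = 2 * d n n := by
  have hnT : ∀ s ∈ G.twinClass t, G.Adj n s := fun s hs => adj_of_mem_twinClass hs hn
  have hcol : ∑ s ∈ G.twinClass t, ∑ k ∈ G.twinClass t, d k s =
      ∑ _s ∈ G.twinClass t, 2 * d n n :=
    sum_congr rfl fun s hs => twinClass_eq_of_mem hs ▸ sum_twinClass_deriv_eq hmix hsq (hnT s hs)
  have hdiag : ∑ s ∈ G.twinClass t, ∑ k ∈ G.twinClass t, d k s =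
      ∑ _s ∈ G.twinClass t, d t t := by
    rw [sum_sum_eq_sum_diag_of_add_swap_eq_zero fun a ha b hb hab =>
      hmix.add_swap_eq_zero hab.symm (hnT b hb).symm (hnT a ha).symm]
    exact sum_congr rfl fun s hs => hsq.diag_eq_of_mem_twinClass hs hn.symm
  rw [hdiag, sum_const, sum_const] at hcol
  exact IsAddTorsionFree.nsmul_right_injective (card_ne_zero_of_mem (mem_twinClass_self t)) hcol

theorem diag_deriv_eq_zero_of_adj [Fintype V] [DecidableEq V] [CharZero K]
    (hmix : G.DerivMixedRule d) (hsq : G.DerivSquareRule d) (hn : G.Adj n t) : d t t = 0 := by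
  have htn := diag_deriv_eq_two_mul_of_adj hmix hsq hn
  have hnt := diag_deriv_eq_two_mul_of_adj hmix hsq hn.symm
  have h3 : (3 : K) * d t t = 0 := by linear_combination -htn - 2 * hnt
  exact (mul_eq_zero.1 h3).resolve_left three_ne_zero

end SimpleGraph

open SimpleGraph in
theorem der_twin_class_column_sum_general {V : Type*} [Fintype V] [DecidableEq V]
    (G : SimpleGraph V) [DecidableRel G.Adj]
{K : Type*} [Field K] [CharZero K]
    (hconn : G.Connected) (hcard : 3 ≤ Fintype.card V)
    (d : V → V → K)
    (h1 : ∀ i j k : V, i ≠ j →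
      (if G.Adj j k then (1:K) else 0) * d i j +
      (if G.Adj i k then (1:K) else 0) * d j i = 0)
    (h2 : ∀ i j : V, ∑ k, (if G.Adj i k then (1:K) else 0) * d k j =
      2 * (if G.Adj i j then (1:K) else 0) * d i i)
    (i : V) :
    ∑ k ∈ Finset.univ.filter (fun j =>
        G.neighborFinset j = G.neighborFinset i), d k i = 0 := by
  have : Nontrivial V := Fintype.one_lt_card_iff_nontrivial.1 (by omega)
  obtain ⟨n, hin⟩ := hconn.preconnected.exists_adj_of_nontrivial i
  calc ∑ k ∈ G.twinClass i, d k i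
    _ = 2 * d n n := sum_twinClass_deriv_eq h1 h2 hin.symm
    _ = 0 := by rw [diag_deriv_eq_zero_of_adj h1 h2 hin, mul_zero]

theorem der_twin_class_column_sum {V : Type*} [Fintype V] [DecidableEq V]
    (G : SimpleGraph V) [DecidableRel G.Adj]
{K : Type*} [Field K] [CharZero K]
    (hconn : G.Connected) (hcard : 3 ≤ Fintype.card V)
    (d : V → V → K)
    (h1 : ∀ i j k : V, i ≠ j →
      (if G.Adj j k then (1:K) else 0) * d i j +
      (if G.Adj i k then (1:K) else 0) * d j i = 0)
    (h2 : ∀ i j : V, ∑ k, (if G.Adj i k then (1:K) else 0) * d k j =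
      2 * (if G.Adj i j then (1:K) else 0) * d i i)
    (i : V)
    (h3 : 3 ≤ (Finset.univ.filter fun j =>
        G.neighborFinset j = G.neighborFinset i).card) :
    ∑ k ∈ Finset.univ.filter (fun j =>
        G.neighborFinset j = G.neighborFinset i), d k i = 0 :=
  der_twin_class_column_sum_general G hconn hcard d h1 h2 i
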